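/- Under the framework assumptions (Ax1)–(Ax5), assume additionally that C is cocomplete, has (epi, mono)-factorizations and wide pullbacks of monomorphisms, that the composite functor TF preserves arbitrary intersections (wide pullbacks of monomorphisms), and that for every monomorphism m : Y → Z the map C(X, T Y) → C(X, T Z) given by postcomposition with T m reflects least upper bounds. Then every reachable I-pointed TF-coalgebra (X, ξ, x₀) (one having no proper subcoalgebra, i.e. every monomorphic strict coalgebra homomorphism into it is an isomorphism) is path-reachable. -/

import Mathlib

open CategoryTheory CategoryTheory.Limits

universe v u

variable {C : Type u} [Category.{v} C]

/-- A morphism `s : S ⟶ G.obj R` is `G`-precise. -/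
def Precise (G : C ⥤ C) {S R : C} (s : S ⟶ G.obj R) : Prop :=
  ∀ {A D : C} (f : S ⟶ G.obj A) (g : R ⟶ D) (h : A ⟶ D),
    f ≫ G.map h = s ≫ G.map g → ∃ d : R ⟶ A, s ≫ G.map d = f ∧ d ≫ h = g

/-- `G` admits precise factorizations w.r.t. a class `S` of objects. -/
def AdmitsPreciseFact (G : C ⥤ C) (S : Set C) : Prop :=
  ∀ {X Y : C} (f : X ⟶ G.obj Y), X ∈ S →
    ∃ (Y' : C) (h : Y' ⟶ Y) (f' : X ⟶ G.obj Y'),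
      Y' ∈ S ∧ Precise G f' ∧ f' ≫ G.map h = f

variable [HasFiniteCoproducts C] [HasTerminal C]

/-- The functor `F + 1 : X ↦ F X + 1`. -/
noncomputable def Fp1 (F : C ⥤ C) : C ⥤ C where
  obj X := F.obj X ⨿ ⊤_ C
  map f := coprod.map (F.map f) (𝟙 _)

/-- A functorial partial order on the hom-sets `C(X, T Y)`. -/
structure HomOrder (T : C ⥤ C) where
  le : ∀ {X Y : C}, (X ⟶ T.obj Y) → (X ⟶ T.obj Y) → Prop
  le_refl : ∀ {X Y : C} (f : X ⟶ T.obj Y), le f f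
  le_trans : ∀ {X Y : C} {f g h : X ⟶ T.obj Y}, le f g → le g h → le f h
  le_antisymm : ∀ {X Y : C} {f g : X ⟶ T.obj Y}, le f g → le g f → f = g
  le_comp : ∀ {X' X Y Y' : C} (g : X' ⟶ X) (h : Y ⟶ Y') {f₁ f₂ : X ⟶ T.obj Y},
    le f₁ f₂ → le (g ≫ f₁ ≫ T.map h) (g ≫ f₂ ≫ T.map h)

/-- The copairing `[η_Y, ⊥_Y] : Y + 1 ⟶ T Y`. -/
noncomputable def cop (T : C ⥤ C) (η : 𝟭 C ⟶ T)
    (bot : (Functor.const C).obj (⊤_ C) ⟶ T) (Y : C) : (Y ⨿ ⊤_ C) ⟶ T.obj Y :=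
  coprod.desc (η.app Y) (bot.app Y)

/-- An `I`-pointed `TF`-coalgebra. -/
structure Coalg (T F : C ⥤ C) (I : C) where
  X : C
  str : X ⟶ T.obj (F.obj X)
  pt : I ⟶ X

/-- A lax homomorphism of `I`-pointed `TF`-coalgebras. -/
def IsLaxHom {T F : C ⥤ C} {I : C} (ord : HomOrder T) (A B : Coalg T F I)
    (f : A.X ⟶ B.X) : Prop :=
  A.pt ≫ f = B.pt ∧ ord.le (A.str ≫ T.map (F.map f)) (f ≫ B.str)

/-- A path of length `n`: a chain of `(F+1)`-precise morphisms starting at `I`. -/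
structure FPath1 (F : C ⥤ C) (I : C) (n : ℕ) where
  P : ℕ → C
  hP0 : P 0 = I
  p : ∀ k, k < n → (P k ⟶ (Fp1 F).obj (P (k + 1)))
  precise : ∀ k (h : k < n), Precise (Fp1 F) (p k h)

/-- A path morphism between paths of lengths `n ≤ m`. -/
structure FPath1Mor {F : C ⥤ C} {I : C} {n m : ℕ} (Pp : FPath1 F I n)
    (Qq : FPath1 F I m) (hnm : n ≤ m) where
  φ : ∀ k, k ≤ n → (Pp.P k ⟶ Qq.P k)
  φ0 : φ 0 (Nat.zero_le n) = eqToHom (Pp.hP0.trans Qq.hP0.symm)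
  comm : ∀ k (h : k < n),
    φ k h.le ≫ Qq.p k (lt_of_lt_of_le h hnm) =
      Pp.p k h ≫ (Fp1 F).map (φ (k + 1) h)

/-- The functor `J`, on objects: the `I`-pointed `TF`-coalgebra induced by a path. -/
noncomputable def Jobj (T F : C ⥤ C) (η : 𝟭 C ⟶ T)
    (bot : (Functor.const C).obj (⊤_ C) ⟶ T) {I : C} {n : ℕ}
    (Pp : FPath1 F I n) : Coalg T F I where
  X := ∐ fun k : Fin (n + 1) => Pp.P k
  str := Sigma.desc fun k =>
    if h : (k : ℕ) < n then
      Pp.p k h ≫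
        coprod.map (F.map (Sigma.ι (fun j : Fin (n + 1) => Pp.P j) ⟨(k : ℕ) + 1, by omega⟩))
          (𝟙 _) ≫
        cop T η bot _
    else
      terminal.from _ ≫ bot.app _
  pt := eqToHom Pp.hP0.symm ≫ Sigma.ι (fun j : Fin (n + 1) => Pp.P j) ⟨0, by omega⟩

/-- The functor `J`, on morphisms. -/
noncomputable def Jmor (T F : C ⥤ C) (η : 𝟭 C ⟶ T)
    (bot : (Functor.const C).obj (⊤_ C) ⟶ T) {I : C} {n m : ℕ}
    {Pp : FPath1 F I n} {Qq : FPath1 F I m} {hnm : n ≤ m}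
    (φ : FPath1Mor Pp Qq hnm) :
    (Jobj T F η bot Pp).X ⟶ (Jobj T F η bot Qq).X :=
  Sigma.desc fun k : Fin (n + 1) =>
    φ.φ k (by omega) ≫ Sigma.ι (fun j : Fin (m + 1) => Qq.P j) ⟨(k : ℕ), by omega⟩

/-- `h` is `Path(I,F+1)`-open. -/
def IsPathOpen {T F : C ⥤ C} {I : C} (η : 𝟭 C ⟶ T)
    (bot : (Functor.const C).obj (⊤_ C) ⟶ T) (ord : HomOrder T)
    {A B : Coalg T F I} (h : A.X ⟶ B.X) : Prop :=
  ∀ {n m : ℕ} (hnm : n ≤ m) (Pp : FPath1 F I n) (Qq : FPath1 F I m)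
    (φ : FPath1Mor Pp Qq hnm)
    (x : (Jobj T F η bot Pp).X ⟶ A.X) (y : (Jobj T F η bot Qq).X ⟶ B.X),
    IsLaxHom ord (Jobj T F η bot Pp) A x →
    IsLaxHom ord (Jobj T F η bot Qq) B y →
    Jmor T F η bot φ ≫ y = x ≫ h →
    ∃ x' : (Jobj T F η bot Qq).X ⟶ A.X,
      IsLaxHom ord (Jobj T F η bot Qq) A x' ∧
      Jmor T F η bot φ ≫ x' = x ∧ x' ≫ h = y

/-- least upper bound w.r.t. a hom-order. -/
def IsLUBhom {T : C ⥤ C} (ord : HomOrder T) {X Y : C}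
    (s : Set (X ⟶ T.obj Y)) (f : X ⟶ T.obj Y) : Prop :=
  (∀ g ∈ s, ord.le g f) ∧ ∀ u, (∀ g ∈ s, ord.le g u) → ord.le f u

/-- Path-reachability: the family of all runs of paths is jointly epic. -/
def PathReachable {T F : C ⥤ C} {I : C} (η : 𝟭 C ⟶ T)
    (bot : (Functor.const C).obj (⊤_ C) ⟶ T) (ord : HomOrder T)
    (A : Coalg T F I) : Prop :=
  ∀ {W : C} (u v : A.X ⟶ W),
    (∀ (n : ℕ) (Pp : FPath1 F I n) (r : (Jobj T F η bot Pp).X ⟶ A.X),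
      IsLaxHom ord (Jobj T F η bot Pp) A r → r ≫ u = r ≫ v) → u = v

section Theorems

variable [HasPullbacks C]


section AuxiliaryLemmas

variable {T F : C ⥤ C} {η : 𝟭 C ⟶ T} {bot : (Functor.const C).obj (⊤_ C) ⟶ T}

set_option linter.unusedSectionVars false

lemma cop_nat (T : C ⥤ C) (η : 𝟭 C ⟶ T) (bot : (Functor.const C).obj (⊤_ C) ⟶ T)
    {Z Z' : C} (w : Z ⟶ Z') :
    coprod.map w (𝟙 (⊤_ C)) ≫ cop T η bot Z' = cop T η bot Z ≫ T.map w := by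
  apply coprod.hom_ext
  · simp only [cop, coprod.map_desc_assoc, coprod.map_desc, coprod.inl_desc, coprod.inl_desc_assoc]
    simpa using η.naturality w
  · simp only [cop, coprod.map_desc_assoc, coprod.map_desc, coprod.inr_desc, coprod.inr_desc_assoc,
      Category.id_comp]
    simpa using bot.naturality w

lemma bot_nat (T : C ⥤ C) (bot : (Functor.const C).obj (⊤_ C) ⟶ T) {Z Z' : C} (w : Z ⟶ Z') :
    bot.app Z ≫ T.map w = bot.app Z' := by
  simpa using (bot.naturality w).symm

lemma Fp1_map_eq {F : C ⥤ C} {X Y : C} (f : X ⟶ Y) :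
    (Fp1 F).map f = coprod.map (F.map f) (𝟙 (⊤_ C)) := rfl

lemma precise_eqToHom {G : C ⥤ C} {S R S' R' : C} {s : S ⟶ G.obj R} (hs : Precise G s)
    (h₁ : S' = S) (h₂ : R = R') :
    Precise G (eqToHom h₁ ≫ s ≫ G.map (eqToHom h₂)) := by
  intro A D f g h heq
  obtain ⟨d, hd1, hd2⟩ := hs (eqToHom h₁.symm ≫ f) (eqToHom h₂ ≫ g) h (by
    rw [Category.assoc, heq]
    simp)
  refine ⟨eqToHom h₂.symm ≫ d, ?_, ?_⟩
  · rw [G.map_comp]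
    simp only [eqToHom_map]
    simp only [← Category.assoc]
    simp only [Category.assoc, eqToHom_trans_assoc, eqToHom_refl, Category.id_comp]
    rw [hd1]
    simp
  · rw [Category.assoc, hd2]
    simp

/-- Extension of a path by one more precise step at the end. -/
noncomputable def extPath (F : C ⥤ C) {I : C} {n : ℕ} (Pp : FPath1 F I n) {P P'' : C}
    (e : Pp.P n = P) (p' : P ⟶ (Fp1 F).obj P'') (hprec : Precise (Fp1 F) p') :
    FPath1 F I (n+1) where
  P := fun j => if j ≤ n then Pp.P j else P''
  hP0 := by
    show (if 0 ≤ n then Pp.P 0 else P'') = I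
    rw [if_pos (Nat.zero_le n)]; exact Pp.hP0
  p := fun k _ =>
    if hkn : k < n then
      eqToHom (if_pos (by omega : k ≤ n)) ≫ Pp.p k hkn ≫
        (Fp1 F).map (eqToHom (if_pos (by omega : k + 1 ≤ n)).symm)
    else
      eqToHom (show (if k ≤ n then Pp.P k else P'') = P by
          rw [if_pos (by omega : k ≤ n)]
          have hk' : k = n := by omega
          rw [hk']; exact e) ≫ p' ≫
        (Fp1 F).map (eqToHom (show P'' = (if k + 1 ≤ n then Pp.P (k+1) else P'') by
          rw [if_neg (by omega : ¬ (k + 1 ≤ n))]))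
  precise := fun k hk => by
    by_cases hkn : k < n
    · rw [dif_pos hkn]
      exact precise_eqToHom (@FPath1.precise _ _ _ _ _ _ _ Pp k hkn) _ _
    · rw [dif_neg hkn]
      exact precise_eqToHom @hprec _ _

lemma extPath_P_le (F : C ⥤ C) {I : C} {n : ℕ} (Pp : FPath1 F I n) {P P'' : C}
    (e : Pp.P n = P) (p' : P ⟶ (Fp1 F).obj P'') (hprec : Precise (Fp1 F) p')
    {j : ℕ} (hj : j ≤ n) : (extPath F Pp e p' @hprec).P j = Pp.P j := if_pos hj

lemma extPath_P_gt (F : C ⥤ C) {I : C} {n : ℕ} (Pp : FPath1 F I n) {P P'' : C}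
    (e : Pp.P n = P) (p' : P ⟶ (Fp1 F).obj P'') (hprec : Precise (Fp1 F) p')
    {j : ℕ} (hj : ¬ (j ≤ n)) : (extPath F Pp e p' @hprec).P j = P'' := if_neg hj

lemma extPath_p_lt (F : C ⥤ C) {I : C} {n : ℕ} (Pp : FPath1 F I n) {P P'' : C}
    (e : Pp.P n = P) (p' : P ⟶ (Fp1 F).obj P'') (hprec : Precise (Fp1 F) p')
    {k : ℕ} (hk : k < n + 1) (hkn : k < n) :
    (extPath F Pp e p' @hprec).p k hk =
      eqToHom (extPath_P_le F Pp e p' @hprec (by omega)) ≫ Pp.p k hkn ≫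
        (Fp1 F).map (eqToHom (extPath_P_le F Pp e p' @hprec (by omega : k + 1 ≤ n)).symm) := by
  show dite _ _ _ = _
  exact dif_pos hkn

lemma extPath_p_last (F : C ⥤ C) {I : C} {n : ℕ} (Pp : FPath1 F I n) {P P'' : C}
    (e : Pp.P n = P) (p' : P ⟶ (Fp1 F).obj P'') (hprec : Precise (Fp1 F) p')
    (hk : n < n + 1) :
    (extPath F Pp e p' @hprec).p n hk =
      eqToHom ((extPath_P_le F Pp e p' @hprec le_rfl).trans e) ≫ p' ≫
        (Fp1 F).map (eqToHom (extPath_P_gt F Pp e p' @hprec (by omega : ¬ (n+1 ≤ n))).symm) := by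
  show dite _ _ _ = _
  exact dif_neg (lt_irrefl n)

/-- The run on an extended path. -/
noncomputable def extRun (T F : C ⥤ C) (η : 𝟭 C ⟶ T) (bot : (Functor.const C).obj (⊤_ C) ⟶ T)
    {I : C} (A : Coalg T F I) {n : ℕ} (Pp : FPath1 F I n) {P P'' : C}
    (e : Pp.P n = P) (p' : P ⟶ (Fp1 F).obj P'') (hprec : Precise (Fp1 F) p')
    (r : (Jobj T F η bot Pp).X ⟶ A.X) (h'' : P'' ⟶ A.X) :
    (Jobj T F η bot (extPath F Pp e p' @hprec)).X ⟶ A.X :=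
  Sigma.desc fun j : Fin (n+2) =>
    if hj : (j : ℕ) ≤ n then
      eqToHom (extPath_P_le F Pp e p' @hprec hj) ≫
        Sigma.ι (fun i : Fin (n+1) => Pp.P i) ⟨(j : ℕ), by omega⟩ ≫ r
    else eqToHom (extPath_P_gt F Pp e p' @hprec hj) ≫ h''

lemma extRun_comp_le (T F : C ⥤ C) (η : 𝟭 C ⟶ T) (bot : (Functor.const C).obj (⊤_ C) ⟶ T)
    {I : C} (A : Coalg T F I) {n : ℕ} (Pp : FPath1 F I n) {P P'' : C}
    (e : Pp.P n = P) (p' : P ⟶ (Fp1 F).obj P'') (hprec : Precise (Fp1 F) p')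
    (r : (Jobj T F η bot Pp).X ⟶ A.X) (h'' : P'' ⟶ A.X) (j : Fin (n+2)) (hj : (j : ℕ) ≤ n) :
    Sigma.ι (fun i : Fin (n+2) => (extPath F Pp e p' @hprec).P i) j ≫
        extRun T F η bot A Pp e p' @hprec r h'' =
      eqToHom (extPath_P_le F Pp e p' @hprec hj) ≫
        Sigma.ι (fun i : Fin (n+1) => Pp.P i) ⟨(j : ℕ), by omega⟩ ≫ r := by
  show Sigma.ι _ j ≫ Sigma.desc _ = _
  rw [Sigma.ι_desc, dif_pos hj]

lemma extRun_comp_gt (T F : C ⥤ C) (η : 𝟭 C ⟶ T) (bot : (Functor.const C).obj (⊤_ C) ⟶ T)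
    {I : C} (A : Coalg T F I) {n : ℕ} (Pp : FPath1 F I n) {P P'' : C}
    (e : Pp.P n = P) (p' : P ⟶ (Fp1 F).obj P'') (hprec : Precise (Fp1 F) p')
    (r : (Jobj T F η bot Pp).X ⟶ A.X) (h'' : P'' ⟶ A.X) (j : Fin (n+2)) (hj : ¬ ((j : ℕ) ≤ n)) :
    Sigma.ι (fun i : Fin (n+2) => (extPath F Pp e p' @hprec).P i) j ≫
        extRun T F η bot A Pp e p' @hprec r h'' =
      eqToHom (extPath_P_gt F Pp e p' @hprec hj) ≫ h'' := by
  show Sigma.ι _ j ≫ Sigma.desc _ = _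
  rw [Sigma.ι_desc, dif_neg hj]

/-- Inductive closure describing "states reachable by extending runs of paths".
Each member is a morphism `h : P ⟶ A.X` arising as the last component of a run. -/
inductive RComp (T F : C ⥤ C) (η : 𝟭 C ⟶ T) (bot : (Functor.const C).obj (⊤_ C) ⟶ T)
    (ord : HomOrder T) (S : Set C) {I : C} (A : Coalg T F I) : ∀ (P : C), (P ⟶ A.X) → Prop
  | base : RComp T F η bot ord S A I A.pt
  | step {P P'' : C} {h : P ⟶ A.X} (h'' : P'' ⟶ A.X) (p' : P ⟶ (Fp1 F).obj P'')
      (hmem : RComp T F η bot ord S A P h) (hS'' : P'' ∈ S)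
      (hprec : Precise (Fp1 F) p')
      (hle : ord.le (p' ≫ (Fp1 F).map h'' ≫ cop T η bot (F.obj A.X)) (h ≫ A.str)) :
      RComp T F η bot ord S A P'' h''

/-- The sequence of pairs of morphisms out of `A.X`, starting with `(u,v)` and closed under
`(f,g) ↦ (ξ ≫ TF⟨1,f⟩, ξ ≫ TF⟨1,g⟩)`. -/
noncomputable def pairSeq [HasBinaryProducts C] (T F : C ⥤ C) {I : C} (A : Coalg T F I)
    {W : C} (u v : A.X ⟶ W) : ℕ → Σ' (W' : C), (A.X ⟶ W') × (A.X ⟶ W')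
  | 0 => ⟨W, u, v⟩
  | n+1 =>
    ⟨T.obj (F.obj (A.X ⨯ (pairSeq T F A u v n).1)),
      A.str ≫ T.map (F.map (prod.lift (𝟙 A.X) (pairSeq T F A u v n).2.1)),
      A.str ≫ T.map (F.map (prod.lift (𝟙 A.X) (pairSeq T F A u v n).2.2))⟩

lemma pairSeq_succ_fst [HasBinaryProducts C] (T F : C ⥤ C) {I : C} (A : Coalg T F I)
    {W : C} (u v : A.X ⟶ W) (n : ℕ) :
    (pairSeq T F A u v (n+1)).2.1 =
      A.str ≫ T.map (F.map (prod.lift (𝟙 A.X) (pairSeq T F A u v n).2.1)) := rfl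

lemma pairSeq_succ_snd [HasBinaryProducts C] (T F : C ⥤ C) {I : C} (A : Coalg T F I)
    {W : C} (u v : A.X ⟶ W) (n : ℕ) :
    (pairSeq T F A u v (n+1)).2.2 =
      A.str ≫ T.map (F.map (prod.lift (𝟙 A.X) (pairSeq T F A u v n).2.2)) := rfl

lemma pairSeq_zero_fst [HasBinaryProducts C] (T F : C ⥤ C) {I : C} (A : Coalg T F I)
    {W : C} (u v : A.X ⟶ W) : (pairSeq T F A u v 0).2.1 = u := rfl

lemma pairSeq_zero_snd [HasBinaryProducts C] (T F : C ⥤ C) {I : C} (A : Coalg T F I)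
    {W : C} (u v : A.X ⟶ W) : (pairSeq T F A u v 0).2.2 = v := rfl

end AuxiliaryLemmas

set_option maxHeartbeats 2000000 in
theorem reachable_is_pathReachable [HasColimits C]
    (T F : C ⥤ C) (I : C) (S : Set C)
    (hiso : ∀ {X Y : C}, X ∈ S → (X ≅ Y) → Y ∈ S) (hI : I ∈ S)
    (η : 𝟭 C ⟶ T) (bot : (Functor.const C).obj (⊤_ C) ⟶ T)
    (ord : HomOrder T)
    (ax1 : AdmitsPreciseFact (Fp1 F) S)
    (ax2 : ∀ (ι : Type v) {Y Z : C} (Xf : ι → C) (e : ∀ i, Xf i ⟶ Y),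
      (∀ {W : C} (u v : Y ⟶ W), (∀ i, e i ≫ u = e i ≫ v) → u = v) →
      ∀ (f g : Y ⟶ T.obj Z), (∀ i, ord.le (e i ≫ f) (e i ≫ g)) → ord.le f g)
    (ax3 : ∀ {X Y : C} (f : X ⟶ T.obj Y), ord.le (terminal.from X ≫ bot.app Y) f)
    (ax4 : ∀ {X Y : C} (f : X ⟶ T.obj Y), X ∈ S →
      IsLUBhom ord {g | ∃ f' : X ⟶ Y ⨿ ⊤_ C, g = f' ≫ cop T η bot Y ∧ ord.le g f} f)
    (ax5 : ∀ {A X Y : C}, A ∈ S → ∀ (x : A ⟶ T.obj X) (y : A ⟶ Y ⨿ ⊤_ C) (h : X ⟶ Y),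
      ord.le (y ≫ cop T η bot Y) (x ≫ T.map h) →
      ∃ x' : A ⟶ X ⨿ ⊤_ C, ord.le (x' ≫ cop T η bot X) x ∧
        x' ≫ coprod.map h (𝟙 (⊤_ C)) = y)
    -- (epi, mono)-factorizations
    (hfact : ∀ {X Y : C} (f : X ⟶ Y),
      ∃ (Z : C) (e : X ⟶ Z) (m : Z ⟶ Y), Epi e ∧ Mono m ∧ e ≫ m = f)
    -- wide pullbacks of monomorphisms exist
    (hwide : ∀ {ι : Type v} (X : C) (Yf : ι → C) (m : ∀ i, Yf i ⟶ X),
      (∀ i, Mono (m i)) → HasLimit (WidePullbackShape.wideCospan X Yf m))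
    -- TF preserves arbitrary intersections (wide pullbacks of monomorphisms)
    (hpres : ∀ {ι : Type v} (X : C) (Yf : ι → C) (m : ∀ i, Yf i ⟶ X),
      (∀ i, Mono (m i)) → ∀ (c : Cone (WidePullbackShape.wideCospan X Yf m)),
        IsLimit c → Nonempty (IsLimit ((F ⋙ T).mapCone c)))
    -- postcomposition with T m reflects least upper bounds, for m a mono
    (hrefl : ∀ {X Y Z : C} (m : Y ⟶ Z), Mono m →
      ∀ (s : Set (X ⟶ T.obj Y)) (f : X ⟶ T.obj Y),
        IsLUBhom ord ((fun g => g ≫ T.map m) '' s) (f ≫ T.map m) →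
        IsLUBhom ord s f)
    (A : Coalg T F I)
    -- A is reachable: it has no proper subcoalgebra
    (hreach : ∀ (B : Coalg T F I) (h : B.X ⟶ A.X), Mono h →
      B.pt ≫ h = A.pt → B.str ≫ T.map (F.map h) = h ≫ A.str → IsIso h) :
    PathReachable η bot ord A := by
  intro W u v HYP
  haveI : HasBinaryProducts C := hasBinaryProducts_of_hasTerminal_and_pullbacks C
  -- order helper lemmas
  have le_pre : ∀ {X' Y' : C} (g : X' ⟶ A.X) {f₁ f₂ : A.X ⟶ T.obj Y'},
      ord.le f₁ f₂ → ord.le (g ≫ f₁) (g ≫ f₂) := by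
    intro X' Y' g f₁ f₂ hf
    have := ord.le_comp g (𝟙 Y') hf
    simpa using this
  have le_pre' : ∀ {X' X'' Y' : C} (g : X' ⟶ X'') {f₁ f₂ : X'' ⟶ T.obj Y'},
      ord.le f₁ f₂ → ord.le (g ≫ f₁) (g ≫ f₂) := by
    intro X' X'' Y' g f₁ f₂ hf
    have := ord.le_comp g (𝟙 Y') hf
    simpa using this
  have le_post : ∀ {X' Y' Z' : C} (h : Y' ⟶ Z') {f₁ f₂ : X' ⟶ T.obj Y'},
      ord.le f₁ f₂ → ord.le (f₁ ≫ T.map h) (f₂ ≫ T.map h) := by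
    intro X' Y' Z' h f₁ f₂ hf
    have := ord.le_comp (𝟙 X') h hf
    simpa using this
  -- membership in S
  have memS : ∀ (P : C) (h : P ⟶ A.X), RComp T F η bot ord S A P h → P ∈ S := by
    intro P h hc
    induction hc with
    | base => exact hI
    | step h'' p' hmem hS'' hprec hle ih => exact hS''
  -- generic computation of components of the J-coalgebra structure, after pushing forward
  have Jstr_comp : ∀ (n : ℕ) (Pp : FPath1 F I n) (r : (Jobj T F η bot Pp).X ⟶ A.X)
      (j : Fin (n+1)),
      Sigma.ι (fun i : Fin (n+1) => Pp.P i) j ≫ (Jobj T F η bot Pp).str ≫ T.map (F.map r) =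
      (if hj : (j : ℕ) < n then
        Pp.p j hj ≫ coprod.map (F.map
            (Sigma.ι (fun i : Fin (n+1) => Pp.P i) ⟨(j : ℕ) + 1, by omega⟩ ≫ r)) (𝟙 (⊤_ C)) ≫
          cop T η bot (F.obj A.X)
      else terminal.from (Pp.P j) ≫ bot.app (F.obj A.X)) := by
    intro n Pp r j
    erw [← Category.assoc]
    show (Sigma.ι (fun i : Fin (n+1) => Pp.P i) j ≫ Sigma.desc _) ≫ T.map (F.map r) = _
    erw [Sigma.ι_desc]
    by_cases hj : (j : ℕ) < n
    · rw [dif_pos hj, dif_pos hj]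
      erw [Category.assoc, Category.assoc]
      have e3 : cop T η bot (F.obj (∐ fun (i : Fin (n+1)) => Pp.P i)) ≫ T.map (F.map r) =
          coprod.map (F.map r) (𝟙 (⊤_ C)) ≫ cop T η bot (F.obj A.X) :=
        (cop_nat T η bot (F.map r)).symm
      erw [e3, ← Category.assoc (coprod.map _ _), coprod.map_map,
        ← F.map_comp, Category.comp_id]; rfl
    · rw [dif_neg hj, dif_neg hj]
      have e4 : bot.app (F.obj (∐ fun (i : Fin (n+1)) => Pp.P i)) ≫ T.map (F.map r) =
          bot.app (F.obj A.X) := bot_nat T bot (F.map r)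
      erw [Category.assoc, e4]
  -- componentwise laxness, extracted
  have compLax : ∀ (n : ℕ) (Pp : FPath1 F I n) (r : (Jobj T F η bot Pp).X ⟶ A.X),
      IsLaxHom ord (Jobj T F η bot Pp) A r → ∀ (j : Fin (n+1)) (hj : (j : ℕ) < n),
      ord.le (Pp.p j hj ≫ coprod.map (F.map
          (Sigma.ι (fun i : Fin (n+1) => Pp.P i) ⟨(j : ℕ) + 1, by omega⟩ ≫ r)) (𝟙 (⊤_ C)) ≫
          cop T η bot (F.obj A.X))
        (Sigma.ι (fun i : Fin (n+1) => Pp.P i) j ≫ r ≫ A.str) := by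
    intro n Pp r hlax j hj
    have h1 := le_pre' (Sigma.ι (fun i : Fin (n+1) => Pp.P i) j) hlax.2
    erw [← Category.assoc, ← Category.assoc] at h1
    erw [Category.assoc] at h1
    rw [Jstr_comp n Pp r j, dif_pos hj] at h1
    erw [Category.assoc] at h1; exact h1
  -- assembling laxness from components
  have laxOfComp : ∀ (n : ℕ) (Pp : FPath1 F I n) (r : (Jobj T F η bot Pp).X ⟶ A.X),
      (∀ (j : Fin (n+1)),
        ord.le (Sigma.ι (fun i : Fin (n+1) => Pp.P i) j ≫ (Jobj T F η bot Pp).str ≫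
            T.map (F.map r))
          (Sigma.ι (fun i : Fin (n+1) => Pp.P i) j ≫ r ≫ A.str)) →
      ord.le ((Jobj T F η bot Pp).str ≫ T.map (F.map r)) (r ≫ A.str) := by
    intro n Pp r hcw
    refine ax2 (ULift.{v} (Fin (n+1))) (fun j => Pp.P j.down)
      (fun j => Sigma.ι (fun i : Fin (n+1) => Pp.P i) j.down) ?_ _ _ ?_
    · intro W' a b hab
      apply Sigma.hom_ext
      intro i
      exact hab ⟨i⟩
    · intro j
      exact hcw j.down
  -- realization of RComp members as (last components of) runs
  have real : ∀ (P : C) (h : P ⟶ A.X), RComp T F η bot ord S A P h →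
      ∃ (n : ℕ) (Pp : FPath1 F I n) (r : (Jobj T F η bot Pp).X ⟶ A.X),
        IsLaxHom ord (Jobj T F η bot Pp) A r ∧
        ∃ (e : Pp.P n = P),
          Sigma.ι (fun j : Fin (n+1) => Pp.P j) ⟨n, Nat.lt_succ_self n⟩ ≫ r = eqToHom e ≫ h := by
    intro P h hc
    induction hc with
    | base =>
      refine ⟨0, ⟨fun _ => I, rfl, fun k hk => absurd hk (by omega),
        fun k hk => @absurd _ _ hk (by omega)⟩, Sigma.desc (fun _ => A.pt), ⟨?_, ?_⟩, rfl, ?_⟩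
      · show (eqToHom _ ≫ Sigma.ι (fun _ : Fin 1 => I) ⟨0, by omega⟩) ≫
          Sigma.desc (fun _ => A.pt) = A.pt
        rw [Category.assoc, Sigma.ι_desc]
        simp
      · apply laxOfComp
        intro j
        erw [Jstr_comp 0 _ _ j, dif_neg (by omega)]
        exact ax3 _
      · show Sigma.ι (fun _ : Fin 1 => I) ⟨0, by omega⟩ ≫ Sigma.desc (fun _ => A.pt) =
          eqToHom rfl ≫ A.pt
        rw [Sigma.ι_desc]
        simp
    | @step P P'' h h'' p' hmem hS'' hprec hle ih =>
      obtain ⟨n, Pp, r, ⟨hpt, hlax⟩, e, hcomp⟩ := ih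
      refine ⟨n+1, extPath F Pp e p' @hprec, extRun T F η bot A Pp e p' @hprec r h'', ⟨?_, ?_⟩,
        extPath_P_gt F Pp e p' @hprec (by omega : ¬ (n+1 ≤ n)), ?_⟩
      · -- the pointing condition
        show (eqToHom _ ≫ Sigma.ι (fun i : Fin (n+2) => (extPath F Pp e p' @hprec).P i)
            ⟨0, by omega⟩) ≫ extRun T F η bot A Pp e p' @hprec r h'' = A.pt
        erw [Category.assoc,
          extRun_comp_le T F η bot A Pp e p' @hprec r h'' ⟨0, by omega⟩ (Nat.zero_le n)]
        have hpt' : (eqToHom Pp.hP0.symm ≫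
            Sigma.ι (fun i : Fin (n+1) => Pp.P i) ⟨0, by omega⟩) ≫ r = A.pt := hpt
        simp only [Category.assoc, eqToHom_trans_assoc] at hpt' ⊢
        exact (Category.assoc _ _ _).symm.trans hpt'
      · -- laxness
        apply laxOfComp
        rintro ⟨m, hm⟩
        rw [Jstr_comp (n+1) (extPath F Pp e p' @hprec)
          (extRun T F η bot A Pp e p' @hprec r h'') ⟨m, hm⟩]
        rcases Nat.lt_trichotomy m n with hmn | hmn | hmn
        · -- m < n : use the laxness of the original run
          rw [dif_pos (show m < n+1 by omega), extPath_p_lt F Pp e p' @hprec (by omega) hmn,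
            extRun_comp_le T F η bot A Pp e p' @hprec r h'' ⟨m+1, by omega⟩
              (show m + 1 ≤ n by omega)]
          conv_rhs => erw [← Category.assoc,
            extRun_comp_le T F η bot A Pp e p' @hprec r h'' ⟨m, hm⟩ (show m ≤ n by omega)]
          simp only [← Fp1_map_eq, Category.assoc, ← Functor.map_comp_assoc, ← Functor.map_comp,
            eqToHom_trans_assoc, eqToHom_refl, Category.id_comp]
          erw [← Functor.map_comp_assoc, eqToHom_trans_assoc, eqToHom_refl, Category.id_comp, Category.assoc]
          exact le_pre' (eqToHom _) (compLax n Pp r ⟨hpt, hlax⟩ ⟨m, by omega⟩ hmn)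
        · -- m = n : use hle
          subst hmn
          rw [dif_pos (show m < m+1 by omega), extPath_p_last F Pp e p' @hprec (by omega),
            extRun_comp_gt T F η bot A Pp e p' @hprec r h'' ⟨m+1, by omega⟩
              (show ¬ (m + 1 ≤ m) by omega)]
          conv_rhs => erw [← Category.assoc,
            extRun_comp_le T F η bot A Pp e p' @hprec r h'' ⟨m, hm⟩ (show m ≤ m by omega)]
          have hcomp' : Sigma.ι (fun i : Fin (m+1) => Pp.P i) ⟨m, by omega⟩ ≫ r ≫ A.str =
              eqToHom e ≫ h ≫ A.str := by
            erw [← Category.assoc]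
            have : Sigma.ι (fun i : Fin (m+1) => Pp.P i) ⟨m, by omega⟩ ≫ r = eqToHom e ≫ h :=
              hcomp
            erw [this, Category.assoc]
          simp only [← Fp1_map_eq, Category.assoc, ← Functor.map_comp_assoc, ← Functor.map_comp,
            eqToHom_trans_assoc, eqToHom_refl, Category.id_comp]
          erw [← Functor.map_comp_assoc, eqToHom_trans_assoc, eqToHom_refl, Category.id_comp, Category.assoc, hcomp']
          erw [eqToHom_trans_assoc]
          exact le_pre' (eqToHom _) hle
        · -- m = n+1 : trivial by ax3
          have hm2 : m = n + 1 := by omega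
          subst hm2
          rw [dif_neg (show ¬ (n + 1 < n + 1) by omega)]
          exact ax3 _
      · exact extRun_comp_gt T F η bot A Pp e p' @hprec r h'' ⟨n+1, by omega⟩
          (show ¬ (n + 1 ≤ n) by omega)
  -- hence RComp members are equalized by u and v
  have R0 : ∀ (P : C) (h : P ⟶ A.X), RComp T F η bot ord S A P h → h ≫ u = h ≫ v := by
    intro P h hc
    obtain ⟨n, Pp, r, hlax, e, hcomp⟩ := real P h hc
    have := HYP n Pp r hlax
    have h2 : Sigma.ι (fun j : Fin (n+1) => Pp.P j) ⟨n, Nat.lt_succ_self n⟩ ≫ r ≫ u =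
        Sigma.ι (fun j : Fin (n+1) => Pp.P j) ⟨n, Nat.lt_succ_self n⟩ ≫ r ≫ v := by
      exact congrArg (fun x => Sigma.ι (fun j : Fin (n+1) => Pp.P j) ⟨n, Nat.lt_succ_self n⟩ ≫ x) this
    erw [← Category.assoc, ← Category.assoc, hcomp] at h2
    rw [Category.assoc, Category.assoc] at h2
    exact (cancel_epi (eqToHom e)).mp h2
  -- the key order-theoretic lemma
  have lemM : ∀ (P : C), P ∈ S → ∀ (c : P ⟶ T.obj (F.obj A.X)) {Z' : C} (φ ψ : A.X ⟶ Z'),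
      (∀ x' : P ⟶ F.obj A.X ⨿ ⊤_ C, ord.le (x' ≫ cop T η bot (F.obj A.X)) c →
        x' ≫ (Fp1 F).map φ = x' ≫ (Fp1 F).map ψ) →
      c ≫ T.map (F.map φ) = c ≫ T.map (F.map ψ) := by
    intro P hP c Z' φ ψ hx
    have key : ∀ (φ' ψ' : A.X ⟶ Z'),
        (∀ x' : P ⟶ F.obj A.X ⨿ ⊤_ C, ord.le (x' ≫ cop T η bot (F.obj A.X)) c →
          x' ≫ (Fp1 F).map φ' = x' ≫ (Fp1 F).map ψ') →
        ord.le (c ≫ T.map (F.map φ')) (c ≫ T.map (F.map ψ')) := by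
      intro φ' ψ' hx'
      refine (ax4 (c ≫ T.map (F.map φ')) hP).2 _ ?_
      rintro g ⟨y', rfl, hg⟩
      obtain ⟨x', hx1, hx2⟩ := ax5 hP c y' (F.map φ') hg
      have e1 : y' ≫ cop T η bot (F.obj Z') =
          x' ≫ (Fp1 F).map φ' ≫ cop T η bot (F.obj Z') := by
        erw [← Category.assoc, ← hx2]
        rfl
      erw [e1, ← Category.assoc, hx' x' hx1, Category.assoc, Fp1_map_eq,
        cop_nat T η bot (F.map ψ'), ← Category.assoc]
      exact le_post (F.map ψ') hx1
    exact ord.le_antisymm (key φ ψ hx) (key ψ φ (fun x' h => (hx x' h).symm))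
  -- the claim: all RComp members equalize each pair in the sequence
  have claim : ∀ (n : ℕ) (P : C) (h : P ⟶ A.X), RComp T F η bot ord S A P h →
      h ≫ (pairSeq T F A u v n).2.1 = h ≫ (pairSeq T F A u v n).2.2 := by
    intro n
    induction n with
    | zero =>
      intro P h hc
      rw [pairSeq_zero_fst, pairSeq_zero_snd]
      exact R0 P h hc
    | succ n ih =>
      intro P h hc
      erw [pairSeq_succ_fst, pairSeq_succ_snd, ← Category.assoc, ← Category.assoc]
      apply lemM P (memS P h hc) (h ≫ A.str)
      intro x' hx'
      obtain ⟨Y', h₂, p₂, hY'S, hp₂, hfac⟩ := ax1 x' (memS P h hc)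
      have hc₂ : RComp T F η bot ord S A Y' h₂ :=
        RComp.step h₂ p₂ hc hY'S @hp₂ (by erw [← Category.assoc, hfac]; exact hx')
      have e2 : h₂ ≫ prod.lift (𝟙 A.X) (pairSeq T F A u v n).2.1 =
          h₂ ≫ prod.lift (𝟙 A.X) (pairSeq T F A u v n).2.2 := by
        apply Limits.prod.hom_ext <;> simp [ih Y' h₂ hc₂]
      rw [← hfac]
      erw [Category.assoc, Category.assoc, ← (Fp1 F).map_comp, ← (Fp1 F).map_comp, e2]
  -- ### Construction of the subcoalgebra
  -- For each n, construct the "equalizer" E n of the n-th pair, as a wide pullback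
  -- of two (split mono) graph morphisms, so that `hpres` applies to it.
  have hE : ∀ n : ℕ, ∃ (En : C) (dn : En ⟶ A.X), Mono dn ∧
      (dn ≫ (pairSeq T F A u v n).2.1 = dn ≫ (pairSeq T F A u v n).2.2) ∧
      (∀ (Z : C) (z : Z ⟶ A.X),
        z ≫ (pairSeq T F A u v n).2.1 = z ≫ (pairSeq T F A u v n).2.2 →
        ∃ zl : Z ⟶ En, zl ≫ dn = z) ∧
      (∀ (Z : C) (b : Z ⟶ T.obj (F.obj A.X)),
        b ≫ T.map (F.map (prod.lift (𝟙 A.X) (pairSeq T F A u v n).2.1)) =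
          b ≫ T.map (F.map (prod.lift (𝟙 A.X) (pairSeq T F A u v n).2.2)) →
        ∃ bl : Z ⟶ T.obj (F.obj En), bl ≫ T.map (F.map dn) = b) := by
    intro n
    set fg1 := (pairSeq T F A u v n).2.1 with hfg1
    set fg2 := (pairSeq T F A u v n).2.2 with hfg2
    set arrn : ULift.{v} Bool → (A.X ⟶ A.X ⨯ (pairSeq T F A u v n).1) :=
      fun i => cond i.down (prod.lift (𝟙 A.X) fg1) (prod.lift (𝟙 A.X) fg2) with harrn
    have monoArr : ∀ i, Mono (arrn i) := by
      rintro ⟨(_|_)⟩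
      all_goals {
        constructor
        intro Z a b hab
        have := hab =≫ prod.fst
        simpa [arrn, prod.lift_fst] using this }
    haveI : HasLimit (WidePullbackShape.wideCospan (A.X ⨯ (pairSeq T F A u v n).1)
        (fun _ : ULift.{v} Bool => A.X) arrn) := hwide _ _ _ monoArr
    set DE := WidePullbackShape.wideCospan (A.X ⨯ (pairSeq T F A u v n).1)
      (fun _ : ULift.{v} Bool => A.X) arrn with hDE
    set πt : limit DE ⟶ A.X := limit.π DE (some ⟨true⟩) with hπt
    set πf : limit DE ⟶ A.X := limit.π DE (some ⟨false⟩) with hπf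
    set πn : limit DE ⟶ A.X ⨯ (pairSeq T F A u v n).1 := limit.π DE none with hπn
    have wt : πt ≫ prod.lift (𝟙 A.X) fg1 = πn :=
      limit.w DE (WidePullbackShape.Hom.term ⟨true⟩)
    have wf : πf ≫ prod.lift (𝟙 A.X) fg2 = πn :=
      limit.w DE (WidePullbackShape.Hom.term ⟨false⟩)
    have legsEq : πt = πf := by
      have h1 : πt = πn ≫ prod.fst := by rw [← wt]; simp [prod.lift_fst, prod.lift_snd]
      have h2 : πf = πn ≫ prod.fst := by rw [← wf]; simp [prod.lift_fst, prod.lift_snd]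
      rw [h1, h2]
    refine ⟨limit DE, πt, ?_, ?_, ?_, ?_⟩
    · constructor
      intro Z a b hab
      apply limit.hom_ext
      rintro (_ | ⟨(_|_)⟩)
      · show a ≫ πn = b ≫ πn
        rw [← wt, ← Category.assoc, ← Category.assoc, hab]
      · show a ≫ πf = b ≫ πf
        rw [← legsEq]; exact hab
      · exact hab
    · have e1 : πt ≫ fg1 = πn ≫ prod.snd := by rw [← wt]; simp [prod.lift_fst, prod.lift_snd]
      have e2 : πt ≫ fg2 = πn ≫ prod.snd := by rw [legsEq, ← wf]; simp [prod.lift_fst, prod.lift_snd]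
      rw [e1, e2]
    · intro Z z hz
      have wcone : ∀ i : ULift.{v} Bool, (fun _ => z) i ≫ DE.map (WidePullbackShape.Hom.term i) =
          z ≫ prod.lift (𝟙 A.X) fg1 := by
        rintro ⟨(_|_)⟩
        · show z ≫ prod.lift (𝟙 A.X) fg2 = z ≫ prod.lift (𝟙 A.X) fg1
          apply Limits.prod.hom_ext <;> simp [hz]
        · rfl
      refine ⟨limit.lift DE (WidePullbackShape.mkCone (F := DE) (z ≫ prod.lift (𝟙 A.X) fg1)
        (fun _ => z) wcone), ?_⟩
      exact limit.lift_π (WidePullbackShape.mkCone (F := DE) (z ≫ prod.lift (𝟙 A.X) fg1)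
        (fun _ => z) wcone) (some (ULift.up true))
    · intro Z b hb
      obtain ⟨LE⟩ := hpres _ _ _ monoArr (limit.cone DE) (limit.isLimit DE)
      have wcone : ∀ i : ULift.{v} Bool,
          (fun _ : ULift.{v} Bool => b) i ≫ (DE ⋙ (F ⋙ T)).map (WidePullbackShape.Hom.term i) =
          b ≫ T.map (F.map (prod.lift (𝟙 A.X) fg1)) := by
        rintro ⟨(_|_)⟩
        · exact hb.symm
        · rfl
      refine ⟨LE.lift (WidePullbackShape.mkCone (F := DE ⋙ (F ⋙ T))
        (b ≫ T.map (F.map (prod.lift (𝟙 A.X) fg1))) (fun _ => b) wcone), ?_⟩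
      have := LE.fac (WidePullbackShape.mkCone (F := DE ⋙ (F ⋙ T))
        (b ≫ T.map (F.map (prod.lift (𝟙 A.X) fg1))) (fun _ => b) wcone) (some ⟨true⟩)
      exact this
  choose E d dMono dEq liftE liftTE using hE
  -- Now build V, the intersection of all the E n.
  set DV := WidePullbackShape.wideCospan A.X (fun i : ULift.{v} ℕ => E i.down)
    (fun i => d i.down) with hDV
  haveI : HasLimit DV := hwide _ _ _ (fun i => dMono i.down)
  set V := limit DV with hV
  set vb : V ⟶ A.X := limit.π DV none with hvb
  have wV : ∀ n : ℕ, limit.π DV (some ⟨n⟩) ≫ d n = vb :=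
    fun n => limit.w DV (WidePullbackShape.Hom.term ⟨n⟩)
  have vbMono : Mono vb := by
    constructor
    intro Z a b hab
    apply limit.hom_ext
    rintro (_ | i)
    · exact hab
    · have h1 : (a ≫ limit.π DV (some i)) ≫ d i.down = (b ≫ limit.π DV (some i)) ≫ d i.down := by
        erw [Category.assoc, Category.assoc]
        show a ≫ limit.π DV (some ⟨i.down⟩) ≫ d i.down = b ≫ limit.π DV (some ⟨i.down⟩) ≫ d i.down
        erw [← Category.assoc, ← Category.assoc, Category.assoc, Category.assoc, wV i.down, hab]
      exact (cancel_mono (d i.down)).mp h1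
  -- the point of V
  have hpt : ∀ n : ℕ, ∃ pn : I ⟶ E n, pn ≫ d n = A.pt :=
    fun n => liftE n I A.pt (claim n I A.pt RComp.base)
  choose ptE hptE using hpt
  have wpt : ∀ i : ULift.{v} ℕ, (fun j : ULift.{v} ℕ => ptE j.down) i ≫
      DV.map (WidePullbackShape.Hom.term i) = A.pt := fun i => hptE i.down
  set ptV : I ⟶ V :=
    limit.lift DV (WidePullbackShape.mkCone (F := DV) A.pt (fun i => ptE i.down) wpt)
    with hptV
  have ptVfac : ptV ≫ vb = A.pt :=
    limit.lift_π (WidePullbackShape.mkCone (F := DV) A.pt (fun i => ptE i.down) wpt)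
      (none : WidePullbackShape (ULift.{v} ℕ))
  -- the structure of V
  have hτ : ∀ n : ℕ, ∃ τn : V ⟶ T.obj (F.obj (E n)), τn ≫ T.map (F.map (d n)) = vb ≫ A.str := by
    intro n
    apply liftTE n V (vb ≫ A.str)
    have e1 : vb ≫ (pairSeq T F A u v (n+1)).2.1 = vb ≫ (pairSeq T F A u v (n+1)).2.2 := by
      erw [← wV (n+1), Category.assoc, Category.assoc, dEq (n+1)]; rfl
    have e2 := pairSeq_succ_fst T F A u v n
    have e3 := pairSeq_succ_snd T F A u v n
    rw [e2, e3] at e1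
    exact (Category.assoc _ _ _).trans (e1.trans (Category.assoc _ _ _).symm)
  choose τ hτfac using hτ
  obtain ⟨LV⟩ := hpres A.X (fun i : ULift.{v} ℕ => E i.down) (fun i => d i.down)
    (fun i => dMono i.down) (limit.cone DV) (limit.isLimit DV)
  have wσ : ∀ i : ULift.{v} ℕ, (fun j : ULift.{v} ℕ => τ j.down) i ≫
      (DV ⋙ (F ⋙ T)).map (WidePullbackShape.Hom.term i) = vb ≫ A.str := fun i => hτfac i.down
  set σ : V ⟶ T.obj (F.obj V) := LV.lift (WidePullbackShape.mkCone (F := DV ⋙ (F ⋙ T))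
    (vb ≫ A.str) (fun i => τ i.down) wσ) with hσ
  have σfac : σ ≫ T.map (F.map vb) = vb ≫ A.str := by
    have := LV.fac (WidePullbackShape.mkCone (F := DV ⋙ (F ⋙ T))
      (vb ≫ A.str) (fun i => τ i.down) wσ) none
    exact this
  -- apply reachability
  have hiso2 : IsIso vb := hreach ⟨V, σ, ptV⟩ vb vbMono ptVfac σfac
  have hfin : vb ≫ u = vb ≫ v := by
    have d0 : d 0 ≫ u = d 0 ≫ v := by
      have := dEq 0
      rwa [pairSeq_zero_fst, pairSeq_zero_snd] at this
    erw [← wV 0, Category.assoc, Category.assoc, d0]; rfl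
  haveI := hiso2
  exact (cancel_epi vb).mp hfin


end Theorems
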